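/- Let C = (G, M, I) be a formal context, M_rem ⊆ M, and C★ = (G, M, I★) where I★ = I \ {(g,m) : g ∈ G, m ∈ M_rem}. Denote by INT, EXT the intent/extent sets of C and by INT★, EXT★ those of C★. Then: (1) if (∅, M) is a concept of C, INT★ = {B \ M_rem : B ∈ INT, B ≠ M} ∪ {M} and EXT★ ⊆ EXT; (2) otherwise INT★ = {B \ M_rem : B ∈ INT} ∪ {M} and EXT★ \ {∅} ⊆ EXT. -/
import Mathlib


variable {G M : Type*}

/-- Attribute derivation of a set of objects, relative to attribute carrier `atts`. -/
def attUp (atts : Set M) (I : Set (G × M)) (A : Set G) : Set M :=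
  {m ∈ atts | ∀ g ∈ A, (g, m) ∈ I}

/-- Object derivation of a set of attributes. -/
def objDown (I : Set (G × M)) (Bs : Set M) : Set G :=
  {g | ∀ m ∈ Bs, (g, m) ∈ I}

/-- `(A, Bs)` is a formal concept of the context with attribute set `atts` and incidence `I`. -/
def IsConcept (atts : Set M) (I : Set (G × M)) (A : Set G) (Bs : Set M) : Prop :=
  attUp atts I A = Bs ∧ objDown I Bs = A

/-- The set of intents. -/
def intents (atts : Set M) (I : Set (G × M)) : Set (Set M) :=
  {Bs | ∃ A, IsConcept atts I A Bs}

/-- The set of extents. -/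
def extents (atts : Set M) (I : Set (G × M)) : Set (Set G) :=
  {A | ∃ Bs, IsConcept atts I A Bs}

section Helpers

variable (Ms : Set M) (I : Set (G × M))

lemma attUp_empty : attUp Ms I (∅ : Set G) = Ms := by
  ext m; simp [attUp]

lemma attUp_subset (A : Set G) : attUp Ms I A ⊆ Ms := fun m hm => hm.1

lemma attUp_anti {A A' : Set G} (h : A ⊆ A') : attUp Ms I A' ⊆ attUp Ms I A :=
  fun m hm => ⟨hm.1, fun g hg => hm.2 g (h hg)⟩

lemma objDown_anti {B B' : Set M} (h : B ⊆ B') : objDown I B' ⊆ objDown I B :=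
  fun g hg m hm => hg m (h hm)

lemma subset_objDown_attUp (A : Set G) : A ⊆ objDown I (attUp Ms I A) :=
  fun g hg m hm => hm.2 g hg

lemma subset_attUp_objDown {B : Set M} (hB : B ⊆ Ms) : B ⊆ attUp Ms I (objDown I B) :=
  fun m hm => ⟨hB hm, fun g hg => hg m hm⟩

lemma attUp_objDown_attUp (A : Set G) :
    attUp Ms I (objDown I (attUp Ms I A)) = attUp Ms I A :=
  subset_antisymm (attUp_anti _ _ (subset_objDown_attUp _ _ _))
    (subset_attUp_objDown _ _ (attUp_subset _ _ _))

lemma mem_intents_iff {B : Set M} :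
    B ∈ intents Ms I ↔ attUp Ms I (objDown I B) = B := by
  constructor
  · rintro ⟨A, h1, h2⟩; rw [h2, h1]
  · intro h; exact ⟨objDown I B, h, rfl⟩

lemma mem_extents_iff {A : Set G} :
    A ∈ extents Ms I ↔ objDown I (attUp Ms I A) = A := by
  constructor
  · rintro ⟨B, h1, h2⟩; rw [h1, h2]
  · intro h; exact ⟨attUp Ms I A, rfl, h⟩

lemma Ms_mem_intents : Ms ∈ intents Ms I := by
  rw [mem_intents_iff]
  exact subset_antisymm (attUp_subset _ _ _) (subset_attUp_objDown _ _ (le_refl _))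

variable (Mrem : Set M)

lemma attUp_star {A : Set G} (hA : A.Nonempty) :
    attUp Ms {p ∈ I | p.2 ∉ Mrem} A = attUp Ms I A \ Mrem := by
  ext m
  obtain ⟨g0, hg0⟩ := hA
  constructor
  · rintro ⟨h1, h2⟩
    exact ⟨⟨h1, fun g hg => (h2 g hg).1⟩, (h2 g0 hg0).2⟩
  · rintro ⟨⟨h1, h2⟩, h3⟩
    exact ⟨h1, fun g hg => ⟨h2 g hg, h3⟩⟩

lemma objDown_star {B : Set M} (hB : ∀ m ∈ B, m ∉ Mrem) :
    objDown {p ∈ I | p.2 ∉ Mrem} B = objDown I B := by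
  ext g
  constructor
  · exact fun h m hm => (h m hm).1
  · exact fun h m hm => ⟨h m hm, hB m hm⟩

/-- Backward: old intent with nonempty extent gives a new intent. -/
lemma diff_mem_intents_star {B : Set M} (hB : B ∈ intents Ms I)
    (hne : (objDown I B).Nonempty) :
    B \ Mrem ∈ intents Ms {p ∈ I | p.2 ∉ Mrem} := by
  obtain ⟨A, hA1, hA2⟩ := hB
  rw [mem_intents_iff]
  have hBMs : B ⊆ Ms := hA1 ▸ attUp_subset Ms I A
  have hdisj : ∀ m ∈ B \ Mrem, m ∉ Mrem := fun m hm => hm.2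
  rw [objDown_star I Mrem hdisj]
  set A' := objDown I (B \ Mrem) with hA'
  have hAA' : A ⊆ A' := hA2 ▸ objDown_anti I Set.diff_subset
  have hA'ne : A'.Nonempty := (hA2 ▸ hne).mono hAA'
  rw [attUp_star Ms I Mrem hA'ne]
  apply subset_antisymm
  · intro m hm
    have : m ∈ attUp Ms I A := attUp_anti Ms I hAA' hm.1
    exact ⟨hA1 ▸ this, hm.2⟩
  · intro m hm
    exact ⟨⟨hBMs hm.1, fun g hg => hg m hm⟩, hm.2⟩

/-- Forward: a new intent other than `Ms` is `B \ Mrem` for an old intent `B`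
with nonempty extent. -/
lemma intents_star_structure {B' : Set M}
    (hB' : B' ∈ intents Ms {p ∈ I | p.2 ∉ Mrem}) :
    B' = Ms ∨ ∃ B ∈ intents Ms I, (objDown I B).Nonempty ∧ B' = B \ Mrem := by
  obtain ⟨A, hA1, hA2⟩ := hB'
  rcases Set.eq_empty_or_nonempty A with hEmpty | hne
  · left; rw [← hA1, hEmpty, attUp_empty]
  · right
    refine ⟨attUp Ms I A, ⟨objDown I (attUp Ms I A), attUp_objDown_attUp Ms I A, rfl⟩, ?_, ?_⟩
    · exact hne.mono (subset_objDown_attUp Ms I A)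
    · rw [← hA1, attUp_star Ms I Mrem hne]

/-- A new extent that is nonempty (or when `(∅, Ms)` is an old concept) is an old extent. -/
lemma extents_star_subset {A : Set G}
    (hA : A ∈ extents Ms {p ∈ I | p.2 ∉ Mrem}) (hne : A.Nonempty) :
    A ∈ extents Ms I := by
  rw [mem_extents_iff] at hA ⊢
  rw [attUp_star Ms I Mrem hne] at hA
  rw [objDown_star I Mrem (fun m hm => hm.2)] at hA
  apply subset_antisymm
  · intro g hg
    rw [← hA]
    exact objDown_anti I Set.diff_subset hg
  · exact subset_objDown_attUp Ms I A

end Helpers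

theorem stmt5 (Ms : Set M) (I : Set (G × M)) (Mrem : Set M) (hrem : Mrem ⊆ Ms)
    (hI : ∀ p ∈ I, p.2 ∈ Ms) :
    (IsConcept Ms I ∅ Ms →
      intents Ms {p ∈ I | p.2 ∉ Mrem} =
        ((fun Bs => Bs \ Mrem) '' {Bs ∈ intents Ms I | Bs ≠ Ms}) ∪ {Ms} ∧
      extents Ms {p ∈ I | p.2 ∉ Mrem} ⊆ extents Ms I) ∧
    (¬ IsConcept Ms I ∅ Ms →
      intents Ms {p ∈ I | p.2 ∉ Mrem} =
        ((fun Bs => Bs \ Mrem) '' intents Ms I) ∪ {Ms} ∧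
      extents Ms {p ∈ I | p.2 ∉ Mrem} \ {∅} ⊆ extents Ms I) := by
  constructor
  · intro hC
    constructor
    · ext B'
      constructor
      · intro hB'
        rcases intents_star_structure Ms I Mrem hB' with h | ⟨B, hB, hBext, rfl⟩
        · right; exact h
        · left
          refine ⟨B, ⟨hB, ?_⟩, rfl⟩
          rintro rfl
          rw [hC.2] at hBext
          exact hBext.ne_empty rfl
      · rintro (⟨B, ⟨hB, hBne⟩, rfl⟩ | hB')
        · apply diff_mem_intents_star Ms I Mrem hB
          rcases Set.eq_empty_or_nonempty (objDown I B) with h | h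
          · exfalso
            obtain ⟨A, hA1, hA2⟩ := hB
            rw [hA2] at h
            rw [h, attUp_empty] at hA1
            exact hBne hA1.symm
          · exact h
        · rw [Set.mem_singleton_iff] at hB'
          subst hB'
          exact Ms_mem_intents _ _
    · intro A hA
      rcases Set.eq_empty_or_nonempty A with rfl | hne
      · exact ⟨Ms, hC⟩
      · exact extents_star_subset Ms I Mrem hA hne
  · intro hC
    have hkey : ∀ B ∈ intents Ms I, (objDown I B).Nonempty := by
      intro B hB
      obtain ⟨A, hA1, hA2⟩ := hB
      rcases Set.eq_empty_or_nonempty (objDown I B) with h | h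
      · exfalso
        rw [hA2] at h
        subst h
        rw [attUp_empty] at hA1
        subst hA1
        exact hC ⟨attUp_empty Ms I, hA2⟩
      · exact h
    constructor
    · ext B'
      constructor
      · intro hB'
        rcases intents_star_structure Ms I Mrem hB' with h | ⟨B, hB, hBext, rfl⟩
        · right; exact h
        · left; exact ⟨B, hB, rfl⟩
      · rintro (⟨B, hB, rfl⟩ | hB')
        · exact diff_mem_intents_star Ms I Mrem hB (hkey B hB)
        · rw [Set.mem_singleton_iff] at hB'
          subst hB'
          exact Ms_mem_intents _ _
    · rintro A ⟨hA, hAne⟩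
      exact extents_star_subset Ms I Mrem hA (Set.nonempty_iff_ne_empty.mpr hAne)
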